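/- arXiv:2503.20378 — 3 statements merged into one kernel-verified Lean document; each statement's English description precedes it below -/
import Mathlib

section
/- For all real numbers Q ≥ 0, α₀ > 0, Δ_f ≥ 0, α₁ ≥ 0 and σ with 0 ≤ σ < 1, setting Δ* = (Δ_f α₁ / α₀)^{1/(1-σ)}, the inequality -α₀ Q + Δ_f α₁ Q^σ ≤ -α₀ (1-σ) (Q - Δ*) holds. -/
theorem scalar_ineq (Q α₀ Δf α₁ σ : ℝ) (hQ : 0 ≤ Q) (hα₀ : 0 < α₀)
    (hΔf : 0 ≤ Δf) (hα₁ : 0 ≤ α₁) (hσ0 : 0 ≤ σ) (hσ1 : σ < 1) :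
    -α₀ * Q + Δf * α₁ * Q ^ σ ≤
      -α₀ * (1 - σ) * (Q - (Δf * α₁ / α₀) ^ (1 / (1 - σ))) := by
  set D : ℝ := (Δf * α₁ / α₀) ^ (1 / (1 - σ)) with hD
  have hσ' : 0 < 1 - σ := by linarith
  have hcα : 0 ≤ Δf * α₁ / α₀ := div_nonneg (mul_nonneg hΔf hα₁) hα₀.le
  have hDnn : 0 ≤ D := Real.rpow_nonneg hcα _
  have hDpow : D ^ (1 - σ) = Δf * α₁ / α₀ := by
    rw [hD, ← Real.rpow_mul hcα, one_div, inv_mul_cancel₀ hσ'.ne', Real.rpow_one]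
  have hgm : Q ^ σ * D ^ (1 - σ) ≤ σ * Q + (1 - σ) * D :=
    Real.geom_mean_le_arith_mean2_weighted hσ0 hσ'.le hQ hDnn (by ring)
  have key : Δf * α₁ * Q ^ σ ≤ α₀ * (σ * Q + (1 - σ) * D) := by
    have := mul_le_mul_of_nonneg_left hgm hα₀.le
    calc Δf * α₁ * Q ^ σ = α₀ * (Q ^ σ * D ^ (1 - σ)) := by
          rw [hDpow]; field_simp
      _ ≤ α₀ * (σ * Q + (1 - σ) * D) := this
  nlinarith [key]
end

section
/- Let ζ(θ) = α(θ - θ̄) if ‖θ - θ̄‖ ≥ d and ζ(θ) = 0 if ‖θ - θ̄‖ < d, where α > 0, d ≥ 0, θ̄ ∈ ℝ^m. Then for all θ, θ* ∈ ℝ^m, ⟨ζ(θ), θ - θ*⟩ ≥ (α/2)‖θ - θ*‖² - (α/2)(‖θ̄ - θ*‖ + d)². -/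
/-!
Outside the dead zone, expanding `‖(x - z) - (c - z)‖²` gives
`2 ⟪x - c, x - z⟫ = ‖x - z‖² - ‖c - z‖² + ‖x - c‖² ≥ ‖x - z‖² - (‖c - z‖ + d)²`.
Inside it the feedback vanishes, and `‖x - z‖ ≤ ‖x - c‖ + ‖c - z‖ < d + ‖c - z‖`
makes the right-hand side nonpositive.
-/

open RealInnerProductSpace

section Deadzone

variable {E : Type*} [NormedAddCommGroup E] [InnerProductSpace ℝ E]

theorem sq_norm_sub_sub_sq_norm_sub_le_two_mul_inner (x y z : E) :
    ‖x - z‖ ^ 2 - ‖y - z‖ ^ 2 ≤ 2 * ⟪x - y, x - z⟫ := by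
  have hxy : x - y = (x - z) - (y - z) := by abel
  have hexpand := norm_sub_sq_real (x - z) (y - z)
  rw [← hxy] at hexpand
  rw [hxy, inner_sub_left, real_inner_self_eq_norm_sq, real_inner_comm]
  nlinarith [sq_nonneg ‖x - y‖]

noncomputable def deadzone (α d : ℝ) (c x : E) : E :=
  if d ≤ ‖x - c‖ then α • (x - c) else 0

theorem inner_deadzone_ge {α d : ℝ} (hα : 0 ≤ α) (hd : 0 ≤ d) (c x z : E) :
    α / 2 * ‖x - z‖ ^ 2 - α / 2 * (‖c - z‖ + d) ^ 2 ≤ ⟪deadzone α d c x, x - z⟫ := by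
  have hcz : ‖c - z‖ ^ 2 ≤ (‖c - z‖ + d) ^ 2 := by gcongr; linarith
  unfold deadzone
  split_ifs with hfar
  · have hinner := sq_norm_sub_sub_sq_norm_sub_le_two_mul_inner x c z
    rw [real_inner_smul_left]
    calc α / 2 * ‖x - z‖ ^ 2 - α / 2 * (‖c - z‖ + d) ^ 2
        ≤ α / 2 * (‖x - z‖ ^ 2 - ‖c - z‖ ^ 2) := by nlinarith
      _ ≤ α * ⟪x - c, x - z⟫ := by nlinarith
  · have hxz : ‖x - z‖ ≤ ‖c - z‖ + d := by
      have := norm_sub_le_norm_sub_add_norm_sub x c z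
      linarith
    have hsq : ‖x - z‖ ^ 2 ≤ (‖c - z‖ + d) ^ 2 := by gcongr
    rw [inner_zero_left]
    nlinarith

end Deadzone

theorem condition_NF_deadzone (m : ℕ) (α d : ℝ) (hα : 0 < α) (hd : 0 ≤ d)
    (θbar : EuclideanSpace ℝ (Fin m)) (ζ : EuclideanSpace ℝ (Fin m) → EuclideanSpace ℝ (Fin m))
    (hζ : ∀ θ, ζ θ = if d ≤ ‖θ - θbar‖ then α • (θ - θbar) else 0) :
    ∀ θ θs : EuclideanSpace ℝ (Fin m),
      (inner ℝ (ζ θ) (θ - θs) : ℝ) ≥ (α / 2) * ‖θ - θs‖ ^ 2 - (α / 2) * (‖θbar - θs‖ + d) ^ 2 := by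
  obtain rfl : ζ = deadzone α d θbar := funext hζ
  exact inner_deadzone_ge hα.le hd θbar
end

section
/- Let Q : ℝⁿ → ℝ be differentiable with Q(x) ≥ 0, let w, f be such that along a differentiable trajectory x(t) one has d/dt Q(x(t)) ≤ -α₀ Q(x(t)) + ⟨∇Q(x(t)), f(t)⟩, where ‖∇Q(x)‖ ≤ α₁ Q(x)^σ for 0 ≤ σ < 1, ‖f(t)‖ ≤ Δ_f, and α₀ > 0, α₁ > 0. Then limsup_{t→∞} Q(x(t)) ≤ (Δ_f α₁ / α₀)^{1/(1-σ)}. -/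
/-!
Writing `g t = Q (x t)` and `c = Δf α₁`, Cauchy–Schwarz and the growth bound on `∇Q` give the
scalar differential inequality `g' ≤ -α₀ g + c g^σ`. For `g ≥ K` the right-hand side equals
`g^σ (c - α₀ g^(1-σ)) ≤ K^σ (c - α₀ K^(1-σ))`, which is a negative constant as soon as
`K > (c / α₀)^(1/(1-σ))`. So `g`, being nonnegative, must drop below every such level `K` in finite
time, and can never cross it upwards again since its derivative is negative on the level set.
-/

open Filter Real Set

theorem exists_ge_le_of_deriv_le_neg {g : ℝ → ℝ} {a K m δ : ℝ} (hg : Differentiable ℝ g)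
    (hm : ∀ t, m ≤ g t) (hδ : 0 < δ) (hd : ∀ t, a ≤ t → K < g t → deriv g t ≤ -δ) :
    ∃ t, a ≤ t ∧ g t ≤ K := by
  by_contra! hgK
  have hdecay : ∀ t, a ≤ t → g t - g a ≤ -δ * (t - a) :=
    fun t ht => (convex_Ici a).image_sub_le_mul_sub_of_deriv_le hg.continuous.continuousOn
      hg.differentiableOn (fun s hs => by
        rw [interior_Ici] at hs
        exact hd s hs.le (hgK s hs.le))
      a self_mem_Ici t ht ht
  set t := a + (g a - m) / δ + 1
  have hat : a ≤ t := by
    have : 0 ≤ (g a - m) / δ := div_nonneg (sub_nonneg.2 (hm a)) hδ.le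
    linarith
  have hδt : δ * (t - a) = g a - m + δ := by
    simp only [t]; field_simp; ring
  linarith [hdecay t hat, hm t]

theorem le_of_deriv_neg_of_eq {g : ℝ → ℝ} {a K : ℝ} (hg : Differentiable ℝ g) (ha : g a ≤ K)
    (hd : ∀ t, a ≤ t → g t = K → deriv g t < 0) {t : ℝ} (ht : a ≤ t) : g t ≤ K :=
  image_le_of_deriv_right_lt_deriv_boundary' (B := fun _ => K) hg.continuous.continuousOn
    (fun s _ => (hg s).hasDerivAt.hasDerivWithinAt) ha continuousOn_const
    (fun _ _ => hasDerivWithinAt_const _ _ K) (fun s hs => hd s hs.1) ⟨ht, le_rfl⟩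

theorem eventually_le_of_deriv_le_neg {g : ℝ → ℝ} {a K m δ : ℝ} (hg : Differentiable ℝ g)
    (hm : ∀ t, m ≤ g t) (hδ : 0 < δ) (hd : ∀ t, a ≤ t → K ≤ g t → deriv g t ≤ -δ) :
    ∀ᶠ t in atTop, g t ≤ K := by
  obtain ⟨T, haT, hTK⟩ := exists_ge_le_of_deriv_le_neg hg hm hδ fun t ht hKt => hd t ht hKt.le
  filter_upwards [eventually_ge_atTop T] with t hTt
  refine le_of_deriv_neg_of_eq hg hTK (fun s hTs hsK => ?_) hTt
  linarith [hd s (haT.trans hTs) hsK.ge]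

theorem neg_mul_add_mul_rpow_le {α₀ c σ K u : ℝ} (hα₀ : 0 ≤ α₀) (hσ0 : 0 ≤ σ) (hσ1 : σ ≤ 1)
    (hK : 0 < K) (hc : c ≤ α₀ * K ^ (1 - σ)) (hKu : K ≤ u) :
    -α₀ * u + c * u ^ σ ≤ K ^ σ * (c - α₀ * K ^ (1 - σ)) := by
  have hu : 0 < u := hK.trans_le hKu
  have hsplit : -α₀ * u + c * u ^ σ = u ^ σ * (c - α₀ * u ^ (1 - σ)) := by
    rw [mul_sub, ← mul_assoc, mul_comm (u ^ σ) α₀, mul_assoc, ← rpow_add hu,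
      add_sub_cancel, rpow_one]
    ring
  have hpow : K ^ (1 - σ) ≤ u ^ (1 - σ) := rpow_le_rpow hK.le hKu (by linarith)
  have hpowσ : K ^ σ ≤ u ^ σ := rpow_le_rpow hK.le hKu hσ0
  rw [hsplit]
  calc u ^ σ * (c - α₀ * u ^ (1 - σ)) ≤ u ^ σ * (c - α₀ * K ^ (1 - σ)) := by
        gcongr
    _ ≤ K ^ σ * (c - α₀ * K ^ (1 - σ)) :=
        mul_le_mul_of_nonpos_right hpowσ (by linarith)

theorem limsup_le_of_deriv_le_neg_mul_add_mul_rpow {g : ℝ → ℝ} {a α₀ c σ : ℝ}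
    (hg : Differentiable ℝ g) (hg0 : ∀ t, 0 ≤ g t) (hα₀ : 0 < α₀) (hc : 0 ≤ c)
    (hσ0 : 0 ≤ σ) (hσ1 : σ < 1)
    (hd : ∀ t, a ≤ t → deriv g t ≤ -α₀ * g t + c * g t ^ σ) :
    limsup g atTop ≤ (c / α₀) ^ (1 / (1 - σ)) := by
  have hcα₀ : 0 ≤ c / α₀ := div_nonneg hc hα₀.le
  refine le_of_forall_gt_imp_ge_of_dense fun K hK => ?_
  have hK0 : 0 < K := (rpow_nonneg hcα₀ _).trans_lt hK
  have hcK : c < α₀ * K ^ (1 - σ) := by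
    rw [one_div, rpow_inv_lt_iff_of_pos hcα₀ hK0.le (by linarith), div_lt_iff₀' hα₀] at hK
    exact hK
  have hδ : 0 < K ^ σ * (α₀ * K ^ (1 - σ) - c) :=
    mul_pos (rpow_pos_of_pos hK0 σ) (sub_pos.2 hcK)
  refine limsup_le_of_le (isCoboundedUnder_le_of_le atTop hg0) ?_
  refine eventually_le_of_deriv_le_neg (a := a) hg hg0 hδ fun t ht hKt => ?_
  have := neg_mul_add_mul_rpow_le hα₀.le hσ0 hσ1.le hK0 hcK.le hKt
  linarith [hd t ht]

theorem proposition1_optimum_estimate (n : ℕ)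
    (Q : EuclideanSpace ℝ (Fin n) → ℝ) (x f : ℝ → EuclideanSpace ℝ (Fin n))
    (α₀ α₁ σ Δf : ℝ) (hα₀ : 0 < α₀) (hα₁ : 0 < α₁) (hσ0 : 0 ≤ σ) (hσ1 : σ < 1)
    (hΔf : 0 ≤ Δf)
    (hQpos : ∀ y, 0 ≤ Q y)
    (hQdiff : Differentiable ℝ Q)
    (hxdiff : Differentiable ℝ x)
    (hgrad : ∀ y, ‖gradient Q y‖ ≤ α₁ * Q y ^ σ)
    (hf : ∀ t, ‖f t‖ ≤ Δf)
    (hderiv : ∀ t, 0 ≤ t →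
      deriv (fun s => Q (x s)) t ≤ -α₀ * Q (x t) + (inner ℝ (gradient Q (x t)) (f t) : ℝ)) :
    Filter.limsup (fun t => Q (x t)) Filter.atTop ≤ (Δf * α₁ / α₀) ^ (1 / (1 - σ)) := by
  have hinner : ∀ t, inner ℝ (gradient Q (x t)) (f t) ≤ Δf * α₁ * Q (x t) ^ σ := fun t =>
    calc inner ℝ (gradient Q (x t)) (f t) ≤ ‖gradient Q (x t)‖ * ‖f t‖ := real_inner_le_norm _ _
      _ ≤ α₁ * Q (x t) ^ σ * Δf :=
        mul_le_mul (hgrad _) (hf t) (norm_nonneg _) ((norm_nonneg _).trans (hgrad _))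
      _ = Δf * α₁ * Q (x t) ^ σ := by ring
  exact limsup_le_of_deriv_le_neg_mul_add_mul_rpow (hQdiff.comp hxdiff) (fun t => hQpos (x t))
    hα₀ (mul_nonneg hΔf hα₁.le) hσ0 hσ1 fun t ht => (hderiv t ht).trans (by linarith [hinner t])
end
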